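/- The function P(x) = max_{y ∈ ℝᵐ} f(x,y) is differentiable and its gradient ∇P is Lipschitz continuous with constant L₁ = (κ+1)ℓ, where κ = ℓ/μ. -/

import Mathlib

noncomputable section

open RealInnerProductSpace

/-- `ℝⁿ` as a Euclidean space. -/
abbrev En (n : ℕ) := EuclideanSpace ℝ (Fin n)

/-- The point `(x, y)` in the Euclidean (ℓ²) product `ℝⁿ × ℝᵐ`. -/
def pair {n m : ℕ} (x : En n) (y : En m) : WithLp 2 (En n × En m) :=
  (WithLp.equiv 2 (En n × En m)).symm (x, y)

/-- Partial gradient `∇ₓ f(x, y)` with respect to the first variable. -/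
def gradx {n m : ℕ} (f : WithLp 2 (En n × En m) → ℝ) (x : En n) (y : En m) : En n :=
  gradient (fun x' => f (pair x' y)) x

/-- Partial gradient `∇_y f(x, y)` with respect to the second variable. -/
def grady {n m : ℕ} (f : WithLp 2 (En n × En m) → ℝ) (x : En n) (y : En m) : En m :=
  gradient (fun y' => f (pair x y')) y

/-- Second-order partial derivative `∇²ₓₓ f(x, y)`. -/
def Hxx {n m : ℕ} (f : WithLp 2 (En n × En m) → ℝ) (x : En n) (y : En m) : En n →L[ℝ] En n :=
  fderiv ℝ (fun x' => gradx f x' y) x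

/-- Second-order partial derivative `∇²ₓ_y f(x, y)`. -/
def Hxy {n m : ℕ} (f : WithLp 2 (En n × En m) → ℝ) (x : En n) (y : En m) : En m →L[ℝ] En n :=
  fderiv ℝ (fun y' => gradx f x y') y

/-- Second-order partial derivative `∇²_yₓ f(x, y)`. -/
def Hyx {n m : ℕ} (f : WithLp 2 (En n × En m) → ℝ) (x : En n) (y : En m) : En n →L[ℝ] En m :=
  fderiv ℝ (fun x' => grady f x' y) x

/-- Second-order partial derivative `∇²_y_y f(x, y)`. -/
def Hyy {n m : ℕ} (f : WithLp 2 (En n × En m) → ℝ) (x : En n) (y : En m) : En m →L[ℝ] En m :=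
  fderiv ℝ (fun y' => grady f x y') y

/-- `H(x,y) = ∇²ₓₓf(x,y) − ∇²ₓ_yf(x,y) (∇²_y_yf(x,y))⁻¹ ∇²_yₓf(x,y)`. -/
def Hmat {n m : ℕ} (f : WithLp 2 (En n × En m) → ℝ) (x : En n) (y : En m) : En n →L[ℝ] En n :=
  Hxx f x y - (Hxy f x y).comp (((Hyy f x y).inverse).comp (Hyx f x y))

/-- `P(x) = max_y f(x, y)` (as a supremum over `y`). -/
def Pmax {n m : ℕ} (f : WithLp 2 (En n × En m) → ℝ) (x : En n) : ℝ := ⨆ y, f (pair x y)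

/-- The Hessian of `P` at `x`, as the derivative of the gradient map. -/
def hessP {n : ℕ} (P : En n → ℝ) (x : En n) : En n →L[ℝ] En n := fderiv ℝ (gradient P) x

/-! The maximiser `y*(x)` exists by strong concavity, and comparing the first-order conditions
`∇_y f(x, y*(x)) = 0 = ∇_y f(x', y*(x'))` shows that `x ↦ y*(x)` is `κ`-Lipschitz. Sandwiching
`P(x') - P(x)` between `f(x', y*(x)) - f(x, y*(x))` and `f(x', y*(x')) - f(x, y*(x'))` and expanding
both to second order gives `∇P(x) = ∇ₓf(x, y*(x))` (Danskin's theorem); the Lipschitz bound then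
follows from `‖(x - x', y*(x) - y*(x'))‖ ≤ (1 + κ)‖x - x'‖`. -/

open InnerProductSpace Set Filter

section InnerProductSpace

variable {E : Type*} [NormedAddCommGroup E] [InnerProductSpace ℝ E] [CompleteSpace E]
  {g : E → ℝ} {μ : ℝ}

theorem IsLocalMax.gradient_eq_zero {y : E} (h : IsLocalMax g y) :
    gradient g y = 0 := by
  simp [gradient, h.fderiv_eq_zero]

theorem hasGradientAt_of_abs_sub_sub_inner_le_sq {φ : E → ℝ} {G x : E} {C : ℝ}
    (h : ∀ x', |φ x' - φ x - ⟪G, x' - x⟫| ≤ C * ‖x' - x‖ ^ 2) : HasGradientAt φ G x := by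
  rw [hasGradientAt_iff_isLittleO]
  refine (Asymptotics.IsBigO.of_bound C (Eventually.of_forall fun x' => ?_)).trans_isLittleO
    (Asymptotics.isLittleO_pow_sub_sub x one_lt_two)
  simpa using h x'

theorem abs_sub_sub_inner_gradient_le {q : E → ℝ} {ℓ : ℝ} (hℓ : 0 ≤ ℓ)
    (hq : Differentiable ℝ q) (hL : ∀ u v, ‖gradient q u - gradient q v‖ ≤ ℓ * ‖u - v‖)
    (a b : E) : |q b - q a - ⟪gradient q a, b - a⟫| ≤ ℓ * ‖b - a‖ ^ 2 := by
  have bound :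
      ∀ z ∈ Metric.closedBall a ‖b - a‖, ‖fderiv ℝ q z - fderiv ℝ q a‖ ≤ ℓ * ‖b - a‖ := by
    intro z hz
    rw [← toDual_gradient, ← toDual_gradient, ← map_sub, LinearIsometryEquiv.norm_map]
    exact (hL z a).trans (mul_le_mul_of_nonneg_left (mem_closedBall_iff_norm.1 hz) hℓ)
  have := (convex_closedBall a ‖b - a‖).norm_image_sub_le_of_norm_fderiv_le' (fun z _ => hq z)
    bound (Metric.mem_closedBall_self (norm_nonneg _)) (mem_closedBall_iff_norm.2 le_rfl)
  rwa [← inner_gradient_left, Real.norm_eq_abs, mul_assoc, ← sq] at this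

theorem ConcaveOn.le_add_inner_of_hasGradientAt {G x : E} (hg : ConcaveOn ℝ univ g)
    (hG : HasGradientAt g G x) (y : E) : g y ≤ g x + ⟪G, y - x⟫ := by
  have hline : HasDerivAt (g ∘ AffineMap.lineMap x y) ⟪G, y - x⟫ (0 : ℝ) :=
    (hasGradientAt_iff_hasFDerivAt.1 hG).comp_hasDerivAt_of_eq (0 : ℝ)
      AffineMap.hasDerivAt_lineMap (by simp)
  have := (hg.comp_affineMap (AffineMap.lineMap x y)).slope_le_of_hasDerivAt (mem_univ 0)
    (mem_univ 1) one_pos hline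
  simp only [slope_def_field, Function.comp_apply, AffineMap.lineMap_apply_zero,
    AffineMap.lineMap_apply_one, sub_zero, div_one] at this
  linarith

theorem StrongConcaveOn.le_add_inner_sub_sq (hg : StrongConcaveOn univ μ g) {x : E}
    (hd : DifferentiableAt ℝ g x) (y : E) :
    g y ≤ g x + ⟪gradient g x, y - x⟫ - μ / 2 * ‖y - x‖ ^ 2 := by
  have hG : HasGradientAt (fun z => g z + μ / 2 * ‖z‖ ^ 2) (gradient g x + μ • x) x := by
    rw [hasGradientAt_iff_hasFDerivAt]
    refine (hd.hasFDerivAt.add ((hasStrictFDerivAt_norm_sq x).hasFDerivAt.const_mul (μ / 2))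
      ).congr_fderiv ?_
    ext v
    simp only [add_apply, smul_apply, coe_innerSL_apply,
      nsmul_eq_mul, smul_eq_mul, map_add, map_smul, toDual_gradient, toDual_apply_apply]
    ring
  have := (strongConcaveOn_iff_convex.1 hg).le_add_inner_of_hasGradientAt hG y
  simp only [inner_add_left, real_inner_smul_left, inner_sub_right,
    real_inner_self_eq_norm_sq, norm_sub_sq_real, real_inner_comm x y] at this ⊢
  linarith

theorem StrongConcaveOn.mul_norm_sub_le_of_gradient_eq_zero (hg : StrongConcaveOn univ μ g)
    {g' : E → ℝ} {y y' : E} (hd : DifferentiableAt ℝ g y) (hd' : DifferentiableAt ℝ g y')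
    (hy : gradient g y = 0) (hy' : gradient g' y' = 0) :
    μ * ‖y - y'‖ ≤ ‖gradient g y' - gradient g' y'‖ := by
  have h₁ := hg.le_add_inner_sub_sq hd y'
  have h₂ := hg.le_add_inner_sub_sq hd' y
  rw [hy, inner_zero_left, norm_sub_rev] at h₁
  have h₃ : ⟪gradient g y', y - y'⟫ ≤ ‖gradient g y' - gradient g' y'‖ * ‖y - y'‖ := by
    simpa [hy'] using real_inner_le_norm (gradient g y' - gradient g' y') (y - y')
  rcases (norm_nonneg (y - y')).eq_or_lt with h | h
  · rw [← h, mul_zero]; exact norm_nonneg _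
  · exact le_of_mul_le_mul_right (by nlinarith) h

theorem StrongConcaveOn.exists_isMaxOn [ProperSpace E] (hμ : 0 < μ)
    (hg : StrongConcaveOn univ μ g) (hd : Differentiable ℝ g) : ∃ y, IsMaxOn g univ y := by
  simp only [isMaxOn_univ_iff]
  refine hd.continuous.exists_forall_ge' 0 ?_
  filter_upwards [tendsto_norm_cocompact_atTop.eventually
    (eventually_ge_atTop (2 * ‖gradient g 0‖ / μ))] with z hz
  have h₁ := hg.le_add_inner_sub_sq (hd 0) z
  have h₂ := real_inner_le_norm (gradient g 0) z
  rw [sub_zero] at h₁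
  rw [div_le_iff₀ hμ] at hz
  nlinarith [norm_nonneg z]

end InnerProductSpace

section Pair

variable {n m : ℕ}

theorem pair_sub_pair (x x' : En n) (y y' : En m) :
    pair x y - pair x' y' = pair (x - x') (y - y') := rfl

theorem norm_pair_le (x : En n) (y : En m) : ‖pair x y‖ ≤ ‖x‖ + ‖y‖ := by
  have : ‖pair x y‖ ^ 2 = ‖x‖ ^ 2 + ‖y‖ ^ 2 := WithLp.prod_norm_sq_eq_of_L2 _
  nlinarith [norm_nonneg (pair x y), norm_nonneg x, norm_nonneg y]

theorem norm_pair_sub_pair_left (x x' : En n) (y : En m) :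
    ‖pair x y - pair x' y‖ = ‖x - x'‖ := by
  rw [pair_sub_pair, sub_self]
  exact WithLp.norm_toLp_fst 2 _ _ _

theorem norm_pair_sub_pair_right (x : En n) (y y' : En m) :
    ‖pair x y - pair x y'‖ = ‖y - y'‖ := by
  rw [pair_sub_pair, sub_self]
  exact WithLp.norm_toLp_snd 2 _ _ _

theorem hasFDerivAt_pair_left (x : En n) (y : En m) :
    HasFDerivAt (fun x' => pair x' y)
      ((WithLp.prodContinuousLinearEquiv 2 ℝ (En n) (En m)).symm.toContinuousLinearMap.comp
        (ContinuousLinearMap.inl ℝ (En n) (En m))) x :=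
  (WithLp.prodContinuousLinearEquiv 2 ℝ (En n) (En m)).symm.hasFDerivAt.comp x
    (hasFDerivAt_prodMk_left x y)

theorem hasFDerivAt_pair_right (x : En n) (y : En m) :
    HasFDerivAt (fun y' => pair x y')
      ((WithLp.prodContinuousLinearEquiv 2 ℝ (En n) (En m)).symm.toContinuousLinearMap.comp
        (ContinuousLinearMap.inr ℝ (En n) (En m))) y :=
  (WithLp.prodContinuousLinearEquiv 2 ℝ (En n) (En m)).symm.hasFDerivAt.comp y
    (hasFDerivAt_prodMk_right x y)

variable {f : WithLp 2 (En n × En m) → ℝ}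

theorem hasGradientAt_gradx {x : En n} {y : En m} (hd : DifferentiableAt ℝ f (pair x y)) :
    HasGradientAt (fun x' => f (pair x' y)) (gradient f (pair x y)).fst x := by
  rw [hasGradientAt_iff_hasFDerivAt]
  refine (hd.hasFDerivAt.comp x (hasFDerivAt_pair_left x y)).congr_fderiv ?_
  ext v
  simp [← inner_gradient_left, WithLp.prod_inner_apply]

theorem hasGradientAt_grady {x : En n} {y : En m} (hd : DifferentiableAt ℝ f (pair x y)) :
    HasGradientAt (fun y' => f (pair x y')) (gradient f (pair x y)).snd y := by
  rw [hasGradientAt_iff_hasFDerivAt]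
  refine (hd.hasFDerivAt.comp y (hasFDerivAt_pair_right x y)).congr_fderiv ?_
  ext v
  simp [← inner_gradient_left, WithLp.prod_inner_apply]

variable {ℓ μ : ℝ}

theorem differentiable_pair_left (hd : Differentiable ℝ f) (y : En m) :
    Differentiable ℝ (fun x => f (pair x y)) :=
  fun _ => (hasGradientAt_gradx (hd _)).differentiableAt

theorem differentiable_pair_right (hd : Differentiable ℝ f) (x : En n) :
    Differentiable ℝ (fun y => f (pair x y)) :=
  fun _ => (hasGradientAt_grady (hd _)).differentiableAt

theorem norm_gradx_sub_le (hd : Differentiable ℝ f)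
    (hlip : ∀ p q : WithLp 2 (En n × En m), ‖gradient f p - gradient f q‖ ≤ ℓ * ‖p - q‖)
    (x x' : En n) (y y' : En m) :
    ‖gradx f x y - gradx f x' y'‖ ≤ ℓ * ‖pair x y - pair x' y'‖ := by
  rw [gradx, gradx, (hasGradientAt_gradx (hd _)).gradient, (hasGradientAt_gradx (hd _)).gradient,
    ← dist_eq_norm]
  exact (WithLp.dist_fst_le _ _).trans ((dist_eq_norm _ _).trans_le (hlip _ _))

theorem norm_grady_sub_le (hd : Differentiable ℝ f)
    (hlip : ∀ p q : WithLp 2 (En n × En m), ‖gradient f p - gradient f q‖ ≤ ℓ * ‖p - q‖)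
    (x x' : En n) (y y' : En m) :
    ‖grady f x y - grady f x' y'‖ ≤ ℓ * ‖pair x y - pair x' y'‖ := by
  rw [grady, grady, (hasGradientAt_grady (hd _)).gradient, (hasGradientAt_grady (hd _)).gradient,
    ← dist_eq_norm]
  exact (WithLp.dist_snd_le _ _).trans ((dist_eq_norm _ _).trans_le (hlip _ _))

theorem Pmax_eq_of_isMaxOn {x : En n} {y : En m}
    (hy : IsMaxOn (fun z => f (pair x z)) univ y) : Pmax f x = f (pair x y) :=
  have hle : ∀ z, f (pair x z) ≤ f (pair x y) := isMaxOn_univ_iff.1 hy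
  le_antisymm (ciSup_le hle) (le_ciSup ⟨_, forall_mem_range.2 hle⟩ y)

theorem norm_sub_le_of_isMaxOn (hμ : 0 < μ) (hd : Differentiable ℝ f)
    (hlip : ∀ p q : WithLp 2 (En n × En m), ‖gradient f p - gradient f q‖ ≤ ℓ * ‖p - q‖)
    {x x' : En n} {y y' : En m} (hconc : StrongConcaveOn univ μ (fun z => f (pair x z)))
    (hy : IsMaxOn (fun z => f (pair x z)) univ y)
    (hy' : IsMaxOn (fun z => f (pair x' z)) univ y') :
    ‖y - y'‖ ≤ ℓ / μ * ‖x - x'‖ := by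
  rw [div_mul_eq_mul_div, le_div_iff₀' hμ]
  calc μ * ‖y - y'‖ ≤ ‖grady f x y' - grady f x' y'‖ :=
        hconc.mul_norm_sub_le_of_gradient_eq_zero (differentiable_pair_right hd x y)
          (differentiable_pair_right hd x y') (hy.isLocalMax univ_mem).gradient_eq_zero
          (hy'.isLocalMax univ_mem).gradient_eq_zero
    _ ≤ ℓ * ‖x - x'‖ := (norm_grady_sub_le hd hlip x x' y' y').trans_eq
        (by rw [norm_pair_sub_pair_left])

theorem abs_Pmax_sub_sub_inner_le (hℓ : 0 ≤ ℓ) (hμ : 0 < μ) (hd : Differentiable ℝ f)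
    (hlip : ∀ p q : WithLp 2 (En n × En m), ‖gradient f p - gradient f q‖ ≤ ℓ * ‖p - q‖)
    {x x' : En n} {y y' : En m} (hconc : StrongConcaveOn univ μ (fun z => f (pair x z)))
    (hy : IsMaxOn (fun z => f (pair x z)) univ y)
    (hy' : IsMaxOn (fun z => f (pair x' z)) univ y') :
    |Pmax f x' - Pmax f x - ⟪gradx f x y, x' - x⟫| ≤ (ℓ / μ + 1) * ℓ * ‖x' - x‖ ^ 2 := by
  have taylor (z : En m) :
      |f (pair x' z) - f (pair x z) - ⟪gradx f x z, x' - x⟫| ≤ ℓ * ‖x' - x‖ ^ 2 :=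
    abs_sub_sub_inner_gradient_le hℓ (differentiable_pair_left hd z)
      (fun u v => (norm_gradx_sub_le hd hlip u v z z).trans_eq (by rw [norm_pair_sub_pair_left]))
      x x'
  have hyy : ‖y' - y‖ ≤ ℓ / μ * ‖x' - x‖ := by
    rw [norm_sub_rev, norm_sub_rev x']
    exact norm_sub_le_of_isMaxOn hμ hd hlip hconc hy hy'
  have cross : ⟪gradx f x y' - gradx f x y, x' - x⟫ ≤ ℓ / μ * ℓ * ‖x' - x‖ ^ 2 :=
    calc ⟪gradx f x y' - gradx f x y, x' - x⟫
        ≤ ‖gradx f x y' - gradx f x y‖ * ‖x' - x‖ := real_inner_le_norm _ _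
      _ ≤ ℓ * ‖y' - y‖ * ‖x' - x‖ := by
        gcongr
        exact (norm_gradx_sub_le hd hlip x x y' y).trans_eq (by rw [norm_pair_sub_pair_right])
      _ ≤ ℓ * (ℓ / μ * ‖x' - x‖) * ‖x' - x‖ := by gcongr
      _ = ℓ / μ * ℓ * ‖x' - x‖ ^ 2 := by ring
  have hmax : f (pair x y') ≤ f (pair x y) := hy (mem_univ y')
  have hmax' : f (pair x' y) ≤ f (pair x' y') := hy' (mem_univ y)
  have hcross_nonneg : 0 ≤ ℓ / μ * ℓ * ‖x' - x‖ ^ 2 := by positivity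
  obtain ⟨lower, -⟩ := abs_le.1 (taylor y)
  obtain ⟨-, upper⟩ := abs_le.1 (taylor y')
  rw [Pmax_eq_of_isMaxOn hy, Pmax_eq_of_isMaxOn hy', abs_le]
  rw [inner_sub_left] at cross
  constructor <;> linarith

end Pair

/-- `P(x) = max_y f(x,y)` is differentiable and `∇P` is Lipschitz continuous
with constant `L₁ = (κ + 1)ℓ`, where `κ = ℓ/μ`. -/
theorem statement1 {n m : ℕ} (f : WithLp 2 (En n × En m) → ℝ) (ℓ μ : ℝ)
    (hμ : 0 < μ) (hμℓ : μ ≤ ℓ)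
    (hf : ContDiff ℝ 2 f)
    (hlip : ∀ p q : WithLp 2 (En n × En m), ‖gradient f p - gradient f q‖ ≤ ℓ * ‖p - q‖)
    (hconc : ∀ x : En n, StrongConcaveOn Set.univ μ (fun y => f (pair x y))) :
    Differentiable ℝ (Pmax f) ∧
    ∀ x x' : En n,
      ‖gradient (Pmax f) x - gradient (Pmax f) x'‖ ≤ (ℓ / μ + 1) * ℓ * ‖x - x'‖ := by
  have hℓ : 0 ≤ ℓ := hμ.le.trans hμℓ
  have hd : Differentiable ℝ f := hf.differentiable (by norm_num)
  choose ystar hystar using fun x => (hconc x).exists_isMaxOn hμ (differentiable_pair_right hd x)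
  have hgrad (x : En n) : HasGradientAt (Pmax f) (gradx f x (ystar x)) x :=
    hasGradientAt_of_abs_sub_sub_inner_le_sq fun x' =>
      abs_Pmax_sub_sub_inner_le hℓ hμ hd hlip (hconc x) (hystar x) (hystar x')
  refine ⟨fun x => (hgrad x).differentiableAt, fun x x' => ?_⟩
  rw [(hgrad x).gradient, (hgrad x').gradient]
  calc ‖gradx f x (ystar x) - gradx f x' (ystar x')‖
      ≤ ℓ * ‖pair x (ystar x) - pair x' (ystar x')‖ := norm_gradx_sub_le hd hlip _ _ _ _
    _ ≤ ℓ * (‖x - x'‖ + ‖ystar x - ystar x'‖) := by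
      rw [pair_sub_pair]
      gcongr
      exact norm_pair_le _ _
    _ ≤ ℓ * (‖x - x'‖ + ℓ / μ * ‖x - x'‖) := by
      gcongr
      exact norm_sub_le_of_isMaxOn hμ hd hlip (hconc x) (hystar x) (hystar x')
    _ = (ℓ / μ + 1) * ℓ * ‖x - x'‖ := by ring
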